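/- Let A be an abelian category and S a support tilting subcategory. If X is an object with projective dimension at most 1 that is a subquotient of an object of S and satisfies Ext¹(S, X) = 0 and Ext¹(X, S) = 0, then X is isomorphic to a direct summand of an object of S; in particular if X is indecomposable then X lies in the essential closure of S. -/

import Mathlib

open CategoryTheory Limits Opposite

noncomputable section

/-- A full subcategory (given by its set of objects) is precovering. -/
def IsPrecovering {A : Type*} [Category A] (V : Set A) : Prop :=
  ∀ x : A, ∃ (v : A) (_ : v ∈ V) (p : v ⟶ x),
    ∀ v' ∈ V, ∀ f : v' ⟶ x, ∃ g : v' ⟶ v, g ≫ p = f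

/-- A full subcategory (given by its set of objects) is preenveloping. -/
def IsPreenveloping {A : Type*} [Category A] (V : Set A) : Prop :=
  ∀ x : A, ∃ (v : A) (_ : v ∈ V) (i : x ⟶ v),
    ∀ v' ∈ V, ∀ f : x ⟶ v', ∃ g : v ⟶ v', i ≫ g = f

/-- `Y` is a subquotient of `w`: a quotient of a subobject of `w`. -/
def IsSubquotientOf {A : Type*} [Category A] [Abelian A] (Y w : A) : Prop :=
  ∃ (Z : A) (i : Z ⟶ w) (p : Z ⟶ Y), Mono i ∧ Epi p

/-- A support tilting subcategory of an abelian category: closed under finite direct sums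
and direct summands, precovering and preenveloping, `Ext²(S, -) = 0`, `Ext¹(S, S) = 0`,
and every subquotient `y` of an object of `S` with `Ext¹(S, y) = 0` is a quotient of an
object of `S`. -/
def SupportTilting (k : Type*) [Field k] {A : Type*} [Category A] [Abelian A] [Linear k A]
    [EnoughProjectives A] (St : Set A) : Prop :=
  (∀ X ∈ St, ∀ Y ∈ St, (X ⊞ Y) ∈ St) ∧
  (∀ X Y : A, (X ⊞ Y) ∈ St → X ∈ St) ∧
  IsPrecovering St ∧ IsPreenveloping St ∧
  (∀ s ∈ St, ∀ Y : A, Subsingleton (((Ext k A 2).obj (op s)).obj Y)) ∧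
  (∀ s ∈ St, ∀ s' ∈ St, Subsingleton (((Ext k A 1).obj (op s)).obj s')) ∧
  (∀ Y : A, (∃ s ∈ St, IsSubquotientOf Y s) →
    (∀ s ∈ St, Subsingleton (((Ext k A 1).obj (op s)).obj Y)) →
    ∃ s ∈ St, ∃ p : s ⟶ Y, Epi p)

/-!
Choose an epimorphic `S`-precover `q : t ⟶ X` with kernel `K`. As `q` is a precover and
`Ext¹(S, t) = 0`, the long exact sequence gives `Ext¹(S, K) = 0`; `K` is a subobject of `t`, so
the support tilting axiom yields an epimorphism `s₁ ⟶ K` from some `s₁ ∈ S`. Shifting dimension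
along it, `Ext¹(X, s₁) = 0` and `Ext²(X, -) = 0` give `Ext¹(X, K) = 0`, so `0 → K → t → X → 0`
splits and `t ≅ X ⊞ K`.
-/

section ExtVanishing

variable {k : Type*} [Field k] {A : Type*} [Category A] [Abelian A] [Linear k A]
  [EnoughProjectives A]

lemma subsingleton_ext_succ_iff {W : A} (P : ProjectiveResolution W) (Y : A) (m : ℕ) :
    Subsingleton (((Ext k A (m + 1)).obj (op W)).obj Y) ↔
      ∀ f : P.complex.X (m + 1) ⟶ Y, P.complex.d (m + 2) (m + 1) ≫ f = 0 →
        ∃ g : P.complex.X m ⟶ Y, P.complex.d (m + 1) m ≫ g = f := by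
  rw [(P.isoExt (R := k) (m + 1) Y).toLinearEquiv.toEquiv.subsingleton_congr,
    ← ModuleCat.isZero_iff_subsingleton, ← HomologicalComplex.exactAt_iff_isZero_homology,
    HomologicalComplex.exactAt_iff' _ m (m + 1) (m + 2) (by simp) (by simp),
    ShortComplex.moduleCat_exact_iff]
  rfl

lemma exists_lift_of_subsingleton_ext_one_kernel {W X t : A} (q : t ⟶ X) [Epi q] (f : W ⟶ X)
    (h : Subsingleton (((Ext k A 1).obj (op W)).obj (kernel q))) :
    ∃ g : W ⟶ t, g ≫ q = f := by
  let P := ProjectiveResolution.of W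
  let π : P.complex.X 0 ⟶ W := P.π.f 0
  have hπ : P.complex.d 1 0 ≫ π = 0 := P.complex_d_comp_π_f_zero
  let l₀ : P.complex.X 0 ⟶ t := Projective.factorThru (π ≫ f) q
  have hl₀ : l₀ ≫ q = π ≫ f := Projective.factorThru_comp _ q
  have hd : (P.complex.d 1 0 ≫ l₀) ≫ q = 0 := by
    rw [Category.assoc, hl₀, ← Category.assoc, hπ, zero_comp]
  obtain ⟨g, hg⟩ := (subsingleton_ext_succ_iff P (kernel q) 0).1 h (kernel.lift q _ hd) (by
    ext; simp)
  have hdesc : P.complex.d 1 0 ≫ (l₀ - g ≫ kernel.ι q) = 0 := by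
    rw [Preadditive.comp_sub, ← Category.assoc, hg, kernel.lift_ι, sub_self]
  obtain ⟨σ, hσ⟩ : ∃ σ : W ⟶ t, π ≫ σ = l₀ - g ≫ kernel.ι q :=
    ⟨_, (CokernelCofork.IsColimit.desc' P.isColimitCokernelCofork _ hdesc).2⟩
  have : Epi π := inferInstanceAs (Epi (P.π.f 0))
  refine ⟨σ, (cancel_epi π).1 ?_⟩
  rw [← Category.assoc, hσ, Preadditive.sub_comp, hl₀, Category.assoc,
    kernel.condition, comp_zero, sub_zero]

lemma subsingleton_ext_one_kernel_of_forall_lift {W t X : A} (q : t ⟶ X)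
    (hlift : ∀ f : W ⟶ X, ∃ g : W ⟶ t, g ≫ q = f)
    (ht : Subsingleton (((Ext k A 1).obj (op W)).obj t)) :
    Subsingleton (((Ext k A 1).obj (op W)).obj (kernel q)) := by
  let P := ProjectiveResolution.of W
  let π : P.complex.X 0 ⟶ W := P.π.f 0
  have hπ : P.complex.d 1 0 ≫ π = 0 := P.complex_d_comp_π_f_zero
  refine (subsingleton_ext_succ_iff P (kernel q) 0).2 fun f hf => ?_
  obtain ⟨g₁, hg₁⟩ := (subsingleton_ext_succ_iff P t 0).1 ht (f ≫ kernel.ι q) (by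
    rw [← Category.assoc, hf, zero_comp])
  have hdesc : P.complex.d 1 0 ≫ (g₁ ≫ q) = 0 := by
    rw [← Category.assoc, hg₁, Category.assoc, kernel.condition, comp_zero]
  obtain ⟨u, hu⟩ : ∃ u : W ⟶ X, π ≫ u = g₁ ≫ q :=
    ⟨_, (CokernelCofork.IsColimit.desc' P.isColimitCokernelCofork _ hdesc).2⟩
  obtain ⟨v, hv⟩ := hlift u
  have hker : (g₁ - π ≫ v) ≫ q = 0 := by
    rw [Preadditive.sub_comp, Category.assoc, hv, hu, sub_self]
  refine ⟨kernel.lift q _ hker, (cancel_mono (kernel.ι q)).1 ?_⟩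
  rw [Category.assoc, kernel.lift_ι, Preadditive.comp_sub, hg₁, ← Category.assoc, hπ,
    zero_comp, sub_zero]

lemma subsingleton_ext_one_of_epi {X K s : A} (r : s ⟶ K) [Epi r]
    (hs : Subsingleton (((Ext k A 1).obj (op X)).obj s))
    (hker : Subsingleton (((Ext k A 2).obj (op X)).obj (kernel r))) :
    Subsingleton (((Ext k A 1).obj (op X)).obj K) := by
  let P := ProjectiveResolution.of X
  refine (subsingleton_ext_succ_iff P K 0).2 fun f hf => ?_
  let f₁ : P.complex.X 1 ⟶ s := Projective.factorThru f r
  have hf₁ : f₁ ≫ r = f := Projective.factorThru_comp f r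
  have hd : (P.complex.d 2 1 ≫ f₁) ≫ r = 0 := by
    rw [Category.assoc, hf₁, hf]
  obtain ⟨h, hh⟩ := (subsingleton_ext_succ_iff P (kernel r) 1).1 hker (kernel.lift r _ hd) (by
    ext; simp)
  obtain ⟨g, hg⟩ := (subsingleton_ext_succ_iff P s 0).1 hs (f₁ - h ≫ kernel.ι r) (by
    rw [Preadditive.comp_sub, ← Category.assoc, hh, kernel.lift_ι, sub_self])
  refine ⟨g ≫ r, ?_⟩
  rw [← Category.assoc, hg, Preadditive.sub_comp, Category.assoc, kernel.condition, comp_zero,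
    sub_zero, hf₁]

end ExtVanishing

def isoBiprodKernelOfSection {A : Type*} [Category A] [Abelian A] {X t : A} (q : t ⟶ X)
    (σ : X ⟶ t) (hσ : σ ≫ q = 𝟙 X) : t ≅ X ⊞ kernel q :=
  (ShortComplex.Splitting.ofExactOfSection (ShortComplex.kernelSequence q)
      (ShortComplex.kernelSequence_exact q) σ hσ inferInstance).isoBinaryBiproduct ≪≫
    biprod.braiding _ _

lemma IsPrecovering.exists_epi_precover {A : Type*} [Category A] [Preadditive A]
    [HasBinaryBiproducts A] {V : Set A} (hV : IsPrecovering V)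
    (hsum : ∀ X ∈ V, ∀ Y ∈ V, (X ⊞ Y) ∈ V) {X s : A} (hs : s ∈ V) (p : s ⟶ X) [Epi p] :
    ∃ t ∈ V, ∃ q : t ⟶ X, Epi q ∧ ∀ s' ∈ V, ∀ f : s' ⟶ X, ∃ g : s' ⟶ t, g ≫ q = f := by
  obtain ⟨v, hv, c, hc⟩ := hV X
  refine ⟨v ⊞ s, hsum v hv s hs, biprod.desc c p, epi_of_epi_fac (biprod.inr_desc c p),
    fun s' hs' f => ?_⟩
  obtain ⟨g, hg⟩ := hc s' hs' f
  exact ⟨g ≫ biprod.inl, by rw [Category.assoc, biprod.inl_desc, hg]⟩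

theorem stmt17_general {k : Type*} [Field k] {A : Type*} [Category A] [Abelian A] [Linear k A]
    [EnoughProjectives A]
    (St : Set A) (hSt : SupportTilting k St) (X : A)
    (hpd : ∀ n : ℕ, 2 ≤ n → ∀ Y : A, Subsingleton (((Ext k A n).obj (op X)).obj Y))
    (hsub : ∃ s ∈ St, IsSubquotientOf X s)
    (h1 : ∀ s ∈ St, Subsingleton (((Ext k A 1).obj (op s)).obj X))
    (h2 : ∀ s ∈ St, Subsingleton (((Ext k A 1).obj (op X)).obj s)) :
    ∃ s ∈ St, ∃ Y : A, Nonempty (s ≅ X ⊞ Y) := by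
  obtain ⟨hsum, -, hprec, -, -, hext1, hgen⟩ := hSt
  obtain ⟨s₀, hs₀, p₀, hp₀⟩ := hgen X hsub h1
  obtain ⟨t, ht, q, hq, hcover⟩ := hprec.exists_epi_precover hsum hs₀ p₀
  have hK : ∀ s ∈ St, Subsingleton (((Ext k A 1).obj (op s)).obj (kernel q)) := fun s hs =>
    subsingleton_ext_one_kernel_of_forall_lift q (hcover s hs) (hext1 s hs t ht)
  obtain ⟨s₁, hs₁, r, hr⟩ :=
    hgen (kernel q) ⟨t, ht, kernel q, kernel.ι q, 𝟙 _, inferInstance, inferInstance⟩ hK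
  have hXK := subsingleton_ext_one_of_epi r (h2 s₁ hs₁) (hpd 2 le_rfl (kernel r))
  obtain ⟨σ, hσ⟩ := exists_lift_of_subsingleton_ext_one_kernel q (𝟙 X) hXK
  exact ⟨t, ht, kernel q, ⟨isoBiprodKernelOfSection q σ hσ⟩⟩

/-- Let `A` be an abelian category (Krull–Schmidt, with enough projectives and injectives,
all objects of finite length) and `St` a support tilting subcategory.  If `X` has
projective dimension at most 1 (i.e. `Ext^n(X, -) = 0` for `n ≥ 2`), is a subquotient of
an object of `St`, and satisfies `Ext¹(St, X) = 0` and `Ext¹(X, St) = 0`, then `X` is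
isomorphic to a direct summand of an object of `St`. -/
theorem stmt17 {k : Type*} [Field k] {A : Type*} [Category A] [Abelian A] [Linear k A]
    [EnoughProjectives A] [EnoughInjectives A]
    (St : Set A) (hSt : SupportTilting k St) (X : A)
    (hpd : ∀ n : ℕ, 2 ≤ n → ∀ Y : A, Subsingleton (((Ext k A n).obj (op X)).obj Y))
    (hsub : ∃ s ∈ St, IsSubquotientOf X s)
    (h1 : ∀ s ∈ St, Subsingleton (((Ext k A 1).obj (op s)).obj X))
    (h2 : ∀ s ∈ St, Subsingleton (((Ext k A 1).obj (op X)).obj s)) :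
    ∃ s ∈ St, ∃ Y : A, Nonempty (s ≅ X ⊞ Y) :=
  stmt17_general St hSt X hpd hsub h1 h2
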